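/- arXiv:1509.08659 — 2 statements merged into one kernel-verified Lean document; each statement's English description precedes it below -/
import Mathlib

section
/- Let X be an infinite chain with X = X^+. Then no order-preserving self-map of X with finite image belongs to the subsemigroup generated by J = {β ∈ O(X) : |Im(β)| = |X|}; that is, J_f ∩ ⟨J⟩ = ∅. -/
/-!
The hypothesis `#(Ici x) < #X` says that no set of full cardinality is bounded below; in
particular `X` has no least element and every map in `J` has a range that is unbounded below.
Composing monotone maps preserves unboundedness below of the range, so every element of `⟨J⟩`
has a range unbounded below, whereas a finite nonempty range has a least element.
-/

open Cardinal Set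

theorem not_bddBelow_of_mk_eq {X : Type*} [LinearOrder X]
    (hXp : ∀ x : X, #(Ici x) < #X) {s : Set X} (hs : #s = #X) : ¬ BddBelow s := by
  rintro ⟨x, hx⟩
  exact (hs ▸ mk_le_mk_of_subset hx).not_gt (hXp x)

theorem not_bddBelow_range_comp {X : Type*} [LinearOrder X] {f g : X → X} (hf : Monotone f)
    (hf' : ¬ BddBelow (range f)) (hg : ¬ BddBelow (range g)) : ¬ BddBelow (range (f ∘ g)) := by
  refine not_bddBelow_iff.2 fun b => ?_
  obtain ⟨_, ⟨z, rfl⟩, hz⟩ := not_bddBelow_iff.1 hf' b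
  obtain ⟨_, ⟨w, rfl⟩, hw⟩ := not_bddBelow_iff.1 hg z
  exact ⟨f (g w), mem_range_self w, (hf hw.le).trans_lt hz⟩

theorem not_bddBelow_range_foldr_comp {X : Type*} [LinearOrder X] [NoMinOrder X]
    (l : List (X → X)) (hl : ∀ f ∈ l, Monotone f ∧ ¬ BddBelow (range f)) :
    ¬ BddBelow (range (l.foldr (· ∘ ·) id)) := by
  induction l with
  | nil => simp
  | cons f t ih =>
    have ⟨hf, hf'⟩ := hl f List.mem_cons_self
    have ht := ih fun g hg => hl g (List.mem_cons_of_mem f hg)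
    exact not_bddBelow_range_comp (g := t.foldr (· ∘ ·) id) hf hf' ht

theorem noMinOrder_of_mk_Ici_lt {X : Type*} [LinearOrder X]
    (hXp : ∀ x : X, #(Ici x) < #X) : NoMinOrder X where
  exists_lt x := by
    obtain ⟨y, -, hy⟩ := not_bddBelow_iff.1 (not_bddBelow_of_mk_eq hXp mk_univ) x
    exact ⟨y, hy⟩

theorem stmt_12_general {X : Type*} [LinearOrder X] [Infinite X]
    (hXp : ∀ x : X, Cardinal.mk ↥(Set.Ici x) < Cardinal.mk X)
    (α : X → X) (hfin : (Set.range α).Finite) :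
    ¬ ∃ l : List (X → X), l ≠ [] ∧
      (∀ f ∈ l, Monotone f ∧ Cardinal.mk ↥(Set.range f) = Cardinal.mk X) ∧
      α = l.foldr (· ∘ ·) id := by
  rintro ⟨l, -, hl, rfl⟩
  have := noMinOrder_of_mk_Ici_lt hXp
  exact not_bddBelow_range_foldr_comp l
    (fun f hf => ⟨(hl f hf).1, not_bddBelow_of_mk_eq hXp (hl f hf).2⟩) hfin.bddBelow

theorem stmt_12 {X : Type*} [LinearOrder X] [Infinite X]
    (hXp : ∀ x : X, Cardinal.mk ↥(Set.Ici x) < Cardinal.mk X)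
    (α : X → X) (hα : Monotone α) (hfin : (Set.range α).Finite) :
    ¬ ∃ l : List (X → X), l ≠ [] ∧
      (∀ f ∈ l, Monotone f ∧ Cardinal.mk ↥(Set.range f) = Cardinal.mk X) ∧
      α = l.foldr (· ∘ ·) id :=
  stmt_12_general hXp α hfin
end

section
/- Let X be an infinite chain. Then J_f ⊆ ⟨J⟩ if and only if X^0 ≠ ∅, where J_f is the set of order-preserving self-maps with finite image, J is the set of order-preserving self-maps whose image has cardinality |X|, and ⟨J⟩ is the subsemigroup of O(X) generated by J. -/
/-!
If no point has both rays of full cardinality, every point is *low* (`#(Iic c) < #X`) or *high*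
(`#(Ici c) < #X`), and not both. A full-rank monotone map `f` sends low points to low points:
if `a` is low and `f a` high, then `range f ⊆ f '' Iic a ∪ Ici (f a)` is small. If every point is
high, the range of a full-rank map is unbounded below. Both properties pass to composites, and a
constant map violates one of them (dually if every point is low).

Conversely, let `x` have both rays of full cardinality. A monotone `g` fixing `x` is the composite
of two full-rank maps: `g` on `Ici x` glued to the identity below `x`, and `g` on `Iic x` glued to
the identity above. For `α` of finite range with `x ≤ α x`, the values of `α` in `[x, α x]` are
brought across `x` one at a time: with `u` the least of them, write `α = ρ ∘ κ ∘ α'`, where `κ` (the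
identity above `x`) gathers the fibre of `u` at `x`, `ρ` (the identity below `x`) moves `x` to `u`,
and `α'` agrees with `α` above that fibre. Then `α'` fixes `x` or has one value fewer in
`[x, α' x]`, so induction on the number of such values settles the case `x ≤ α x`; the case
`α x ≤ x` is its order dual.
-/

open Cardinal Set OrderDual

/-- The paper's `J`. We work in the submonoid it generates, which is `⟨J⟩ ∪ {id}`. -/
def fullRankMaps (X : Type*) [LinearOrder X] : Set (Function.End X) :=
  {f | Monotone f ∧ #(range f) = #X}

lemma mk_union_lt {X : Type*} [Infinite X] {s t : Set X} (hs : #s < #X) (ht : #t < #X) :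
    #(s ∪ t : Set X) < #X :=
  (mk_union_le s t).trans_lt (add_lt_of_lt (aleph0_le_mk X) hs ht)

section Closure

variable {X : Type*} [LinearOrder X]

lemma mem_fullRankMaps_of_eqOn_id {f : X → X} (hf : Monotone f) {s : Set X} (hs : #s = #X)
    (hfs : EqOn f id s) : f ∈ fullRankMaps X :=
  ⟨hf, le_antisymm (mk_set_le _) (hs ▸ mk_le_mk_of_subset fun y hy => ⟨y, hfs hy⟩)⟩

lemma toDual_comp_mem_closure {f : Function.End X}
    (hf : f ∈ Submonoid.closure (fullRankMaps X)) :
    (toDual ∘ f ∘ ofDual : Function.End Xᵒᵈ) ∈ Submonoid.closure (fullRankMaps Xᵒᵈ) := by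
  induction hf using Submonoid.closure_induction with
  | mem g hg => exact Submonoid.subset_closure ⟨hg.1.dual, hg.2⟩
  | one => exact one_mem _
  | mul g h _ _ hg hh => exact mul_mem hg hh

lemma ofDual_comp_mem_closure {f : Function.End Xᵒᵈ}
    (hf : f ∈ Submonoid.closure (fullRankMaps Xᵒᵈ)) :
    (ofDual ∘ f ∘ toDual : Function.End X) ∈ Submonoid.closure (fullRankMaps X) := by
  induction hf using Submonoid.closure_induction with
  | mem g hg => exact Submonoid.subset_closure ⟨hg.1.dual, hg.2⟩
  | one => exact one_mem _
  | mul g h _ _ hg hh => exact mul_mem hg hh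

end Closure

section NoBalancedPoint

variable {X : Type*} [LinearOrder X]

lemma exists_apply_lt_of_mk_Ici_lt {f : X → X} (hf : #(range f) = #X) {c : X}
    (hc : #(Ici c) < #X) : ∃ z, f z < c := by
  by_contra! h
  exact (hf ▸ (mk_le_mk_of_subset (range_subset_iff.mpr h)).trans_lt hc).false

lemma exists_apply_le_of_mem_closure (hsmall : ∀ c : X, #(Ici c) < #X) {g : Function.End X}
    (hg : g ∈ Submonoid.closure (fullRankMaps X)) (c : X) : ∃ z, g z ≤ c := by
  induction hg using Submonoid.closure_induction_left generalizing c with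
  | one => exact ⟨c, le_rfl⟩
  | mul_left f hf g _ ih =>
    obtain ⟨z, hz⟩ := exists_apply_lt_of_mk_Ici_lt hf.2 (hsmall c)
    obtain ⟨w, hw⟩ := ih z
    exact ⟨w, (hf.1 hw).trans hz.le⟩

variable [Infinite X]

lemma not_mk_Iic_lt_and_mk_Ici_lt (c : X) : ¬ (#(Iic c) < #X ∧ #(Ici c) < #X) := fun h => by
  simpa [Iic_union_Ici] using mk_union_lt h.1 h.2

lemma not_mk_Ici_apply_lt {f : X → X} (hf : f ∈ fullRankMaps X) {a : X} (ha : #(Iic a) < #X) :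
    ¬ #(Ici (f a)) < #X := fun h => by
  have hsub : range f ⊆ f '' Iic a ∪ Ici (f a) := by
    rintro _ ⟨y, rfl⟩
    rcases le_total y a with hy | hy
    · exact Or.inl (mem_image_of_mem f hy)
    · exact Or.inr (hf.1 hy)
  exact (hf.2 ▸ (mk_le_mk_of_subset hsub).trans_lt
    (mk_union_lt (mk_image_le.trans_lt ha) h)).false

lemma mapsTo_setOf_mk_Iic_lt (hsplit : ∀ c : X, #(Iic c) < #X ∨ #(Ici c) < #X)
    {g : Function.End X} (hg : g ∈ Submonoid.closure (fullRankMaps X)) :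
    MapsTo g {a | #(Iic a) < #X} {a | #(Iic a) < #X} := by
  induction hg using Submonoid.closure_induction with
  | mem f hf => exact fun a ha => (hsplit _).resolve_right (not_mk_Ici_apply_lt hf ha)
  | one => exact mapsTo_id _
  | mul f g _ _ hf hg => exact hf.comp hg

theorem exists_mk_Iic_eq_and_mk_Ici_eq_of_const_mem_closure
    (hconst : ∀ c : X, (Function.const X c : Function.End X) ∈ Submonoid.closure (fullRankMaps X)) :
    ∃ x : X, #(Iic x) = #X ∧ #(Ici x) = #X := by
  by_contra! hX
  have hsplit (c : X) : #(Iic c) < #X ∨ #(Ici c) < #X := by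
    rcases (mk_set_le (Iic c)).lt_or_eq with h | h
    · exact Or.inl h
    · exact Or.inr ((mk_set_le _).lt_of_ne (hX c h))
  obtain ⟨c₀⟩ := (inferInstance : Nonempty X)
  by_cases hIic : ∀ c : X, #(Iic c) < #X
  · have hmax (c : X) : c ≤ c₀ :=
      (exists_apply_le_of_mem_closure hIic (toDual_comp_mem_closure (hconst c₀)) c).elim
        fun _ h => h
    have : Iic c₀ = Set.univ := eq_univ_of_forall hmax
    exact (hIic c₀).ne (by rw [this, mk_univ])
  by_cases hIci : ∀ c : X, #(Ici c) < #X
  · have hmin (c : X) : c₀ ≤ c :=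
      (exists_apply_le_of_mem_closure hIci (hconst c₀) c).elim fun _ h => h
    have : Ici c₀ = Set.univ := eq_univ_of_forall hmin
    exact (hIci c₀).ne (by rw [this, mk_univ])
  obtain ⟨a, ha⟩ := not_forall.mp hIic
  obtain ⟨b, hb⟩ := not_forall.mp hIci
  exact not_mk_Iic_lt_and_mk_Ici_lt a
    ⟨mapsTo_setOf_mk_Iic_lt hsplit (hconst a) ((hsplit b).resolve_right hb),
     (hsplit a).resolve_left ha⟩

end NoBalancedPoint

section BalancedPoint

variable {X : Type*} [LinearOrder X] {x : X}

def glueAbove (x : X) (h : X → X) (y : X) : X := if x ≤ y then h y else y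

def glueBelow (x : X) (h : X → X) (y : X) : X := if y ≤ x then h y else y

lemma glueAbove_mem_fullRankMaps (hx : #(Iio x) = #X) {h : X → X} (hh : Monotone h)
    (hxh : x ≤ h x) : glueAbove x h ∈ fullRankMaps X := by
  refine mem_fullRankMaps_of_eqOn_id (fun a b hab => ?_) hx fun y hy => if_neg (not_le.mpr hy)
  unfold glueAbove
  split_ifs with ha hb hb
  · exact hh hab
  · exact absurd (ha.trans hab) hb
  · exact (not_le.mp ha).le.trans (hxh.trans (hh hb))
  · exact hab

lemma glueBelow_mem_fullRankMaps (hx : #(Ioi x) = #X) {h : X → X} (hh : Monotone h)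
    (hhx : h x ≤ x) : glueBelow x h ∈ fullRankMaps X := by
  refine mem_fullRankMaps_of_eqOn_id (fun a b hab => ?_) hx fun y hy => if_neg (not_le.mpr hy)
  unfold glueBelow
  split_ifs with ha hb hb
  · exact hh hab
  · exact (hh ha).trans (hhx.trans (not_le.mp hb).le)
  · exact absurd (hab.trans hb) ha
  · exact hab

lemma glueAbove_comp_glueBelow {g : X → X} (hg : Monotone g) (hgx : g x = x) :
    glueAbove x g ∘ glueBelow x g = g := by
  funext y
  simp only [Function.comp, glueAbove, glueBelow]
  split_ifs with hy hxg hxy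
  · rw [le_antisymm (hgx ▸ hg hy) hxg, hgx]
  · rfl
  · rfl
  · exact absurd (le_of_not_ge hy) hxy

lemma mem_closure_of_apply_eq_self (hIio : #(Iio x) = #X) (hIoi : #(Ioi x) = #X)
    {g : Function.End X} (hg : Monotone g) (hgx : g x = x) :
    g ∈ Submonoid.closure (fullRankMaps X) := by
  rw [← glueAbove_comp_glueBelow hg hgx]
  exact mul_mem (M := Function.End X)
    (Submonoid.subset_closure (glueAbove_mem_fullRankMaps hIio hg hgx.ge))
    (Submonoid.subset_closure (glueBelow_mem_fullRankMaps hIoi hg hgx.le))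

lemma monotone_ite_le_min {α : X → X} (hα : Monotone α) {u : X} (hxu : x ≤ u) :
    Monotone fun y => if α y ≤ u then min y x else α y := by
  intro a b hab
  dsimp only
  split_ifs with ha hb hb
  · exact min_le_min_right x hab
  · exact (min_le_right _ _).trans (hxu.trans (not_le.mp hb).le)
  · exact absurd ((hα hab).trans hb) ha
  · exact hα hab

lemma monotone_ite_lt {α : X → X} (hα : Monotone α) {u : X} (hu : ∀ y, α y < u → α y < x) :
    Monotone fun y => if α y < u then α y else x := by
  intro a b hab
  dsimp only
  split_ifs with ha hb hb
  · exact hα hab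
  · exact (hu a ha).le
  · exact absurd ((hα hab).trans_lt hb) ha
  · exact le_rfl

lemma glueAbove_max_comp_glueBelow_comp {α : X → X} (hα : Monotone α) {u : X} (hxu : x ≤ u)
    (huα : u ≤ α x) (hu : ∀ y, α y < u → α y < x) :
    glueAbove x (max · u) ∘ glueBelow x (fun y => if α y < u then α y else x) ∘
      (fun y => if α y ≤ u then min y x else α y) = α := by
  funext y
  simp only [Function.comp, glueAbove, glueBelow]
  rcases lt_trichotomy (α y) u with hlt | heq | hgt
  · have hyx : y ≤ x := le_of_not_ge fun hxy => (huα.trans (hα hxy)).not_gt hlt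
    have hαx : ¬ x ≤ α y := (hu y hlt).not_ge
    simp [hlt.le, hyx, hlt, hαx]
  · have : α (min y x) = u := by rw [hα.map_min, heq, min_eq_left huα]
    simp [heq, this, hxu]
  · have hαx : ¬ α y ≤ x := (hxu.trans_lt hgt).not_ge
    simp [hgt.not_ge, hαx, hxu.trans hgt.le, hgt.le]

theorem mem_closure_of_le_apply (hIio : #(Iio x) = #X) (hIoi : #(Ioi x) = #X)
    {α : Function.End X} (hα : Monotone α) (hxα : x ≤ α x)
    (hfin : (range α ∩ Icc x (α x)).Finite) : α ∈ Submonoid.closure (fullRankMaps X) := by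
  induction hn : (range α ∩ Icc x (α x)).ncard using Nat.strong_induction_on generalizing α with
  | _ n ih =>
  obtain ⟨_, ⟨⟨z, rfl⟩, hxz, hzx⟩, hmin⟩ :=
    exists_min_image _ id hfin ⟨α x, mem_range_self x, hxα, le_rfl⟩
  have hu (y : X) (hy : α y < α z) : α y < x :=
    lt_of_not_ge fun hxy => (hmin _ ⟨mem_range_self y, hxy, hy.le.trans hzx⟩).not_gt hy
  let α' : Function.End X := fun y => if α y ≤ α z then min y x else α y
  have hα' : Monotone α' := monotone_ite_le_min hα hxz
  have hα'_mem : α' ∈ Submonoid.closure (fullRankMaps X) := by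
    rcases hzx.lt_or_eq with hlt | heq
    · have hα'x : α' x = α x := if_neg hlt.not_ge
      have hsub : range α' ∩ Icc x (α' x) ⊆ (range α ∩ Icc x (α x)) \ {α z} := by
        rintro _ ⟨⟨y, rfl⟩, hxy, hyx⟩
        have hle : ¬ α y ≤ α z := fun hle => by
          have : x ≤ y := (le_min_iff.mp (by simpa only [α', if_pos hle] using hxy)).1
          exact hlt.not_ge ((hα this).trans hle)
        simp only [α', if_neg hle, if_neg hlt.not_ge] at hxy hyx ⊢
        exact ⟨⟨mem_range_self y, hxy, hyx⟩, fun h => hle h.le⟩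
      refine ih _ ?_ hα' (hα'x ▸ hxα) (hfin.subset (hsub.trans sdiff_subset)) rfl
      calc (range α' ∩ Icc x (α' x)).ncard
          ≤ ((range α ∩ Icc x (α x)) \ {α z}).ncard := ncard_le_ncard hsub hfin.sdiff
        _ < n := hn ▸ ncard_sdiff_singleton_lt_of_mem ⟨mem_range_self z, hxz, hzx⟩ hfin
    · exact mem_closure_of_apply_eq_self hIio hIoi hα' ((if_pos heq.ge).trans (min_self x))
  rw [← glueAbove_max_comp_glueBelow_comp hα hxz hzx hu]
  exact mul_mem (M := Function.End X)
    (Submonoid.subset_closure (glueAbove_mem_fullRankMaps hIio (monotone_id.max monotone_const)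
      le_sup_left))
    (mul_mem (M := Function.End X) (Submonoid.subset_closure (glueBelow_mem_fullRankMaps hIoi
      (monotone_ite_lt hα hu) (if_neg hzx.not_gt).le)) hα'_mem)

variable [Infinite X]

lemma mk_Iio_eq_of_mk_Iic_eq (h : #(Iic x) = #X) : #(Iio x) = #X := by
  rw [← Iio_insert, mk_insert self_notMem_Iio] at h
  have : ℵ₀ ≤ #(Iio x) := by
    by_contra! hfin
    exact (aleph0_le_mk X).not_gt (h ▸ add_lt_aleph0 hfin one_lt_aleph0)
  rwa [add_one_eq this] at h

lemma mk_Ioi_eq_of_mk_Ici_eq (h : #(Ici x) = #X) : #(Ioi x) = #X :=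
  have : Infinite Xᵒᵈ := ‹Infinite X›
  mk_Iio_eq_of_mk_Iic_eq (X := Xᵒᵈ) h

theorem mem_closure_of_finite_range (hIic : #(Iic x) = #X) (hIci : #(Ici x) = #X)
    {α : Function.End X} (hα : Monotone α) (hfin : (range α).Finite) :
    α ∈ Submonoid.closure (fullRankMaps X) := by
  have hIio := mk_Iio_eq_of_mk_Iic_eq hIic
  have hIoi := mk_Ioi_eq_of_mk_Ici_eq hIci
  rcases le_total x (α x) with h | h
  · exact mem_closure_of_le_apply hIio hIoi hα h (hfin.subset inter_subset_left)
  · exact ofDual_comp_mem_closure (mem_closure_of_le_apply (x := toDual x)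
      (α := toDual ∘ α ∘ ofDual) hIoi hIio hα.dual h (hfin.subset inter_subset_left))

end BalancedPoint

theorem stmt_14 {X : Type*} [LinearOrder X] [Infinite X] :
    (∀ α : X → X, Monotone α → (Set.range α).Finite →
      ∃ l : List (X → X), l ≠ [] ∧
        (∀ f ∈ l, Monotone f ∧ Cardinal.mk ↥(Set.range f) = Cardinal.mk X) ∧
        α = l.foldr (· ∘ ·) id) ↔
    (∃ x : X, Cardinal.mk ↥(Set.Iic x) = Cardinal.mk X ∧
      Cardinal.mk ↥(Set.Ici x) = Cardinal.mk X) := by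
  constructor
  · intro H
    refine exists_mk_Iic_eq_and_mk_Ici_eq_of_const_mem_closure fun c => ?_
    obtain ⟨l, -, hl, hc⟩ := H (Function.const X c) monotone_const finite_range_const
    rw [hc]
    exact Submonoid.list_prod_mem (M := Function.End X) (l := l) _ fun f hf =>
      Submonoid.subset_closure (s := fullRankMaps X) (hl f hf)
  · rintro ⟨x, hIic, hIci⟩ α hα hfin
    obtain ⟨l, hl, rfl⟩ :=
      Submonoid.exists_list_of_mem_closure (mem_closure_of_finite_range hIic hIci hα hfin)
    refine ⟨l, ?_, hl, rfl⟩
    rintro rfl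
    exact infinite_univ (range_id ▸ hfin)
end
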